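/- Let (U, 𝒜, μ) be a finite measure space and let (P_t)_{t≥0} be a strongly continuous semigroup of self-adjoint continuous linear operators on the real Hilbert space L²(μ). Suppose there exist t₀ > 0, a constant C ≥ 0, and a measurable function k : U × U → ℝ with |k(x,y)| ≤ C for (μ⊗μ)-a.e. (x,y), such that for every f ∈ L²(μ) one has (P_{t₀} f)(x) = ∫ k(x,y) f(y) dμ(y) for μ-a.e. x. Then P_t is a compact operator for every t > 0. -/

import Mathlib

/-!
A bounded kernel on a finite measure space lies in `L²(μ ⊗ μ)`, so `P_{t₀}` is a Hilbert–Schmidt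
operator. Such operators are compact: the kernel-to-operator map is continuous from `L²(μ ⊗ μ)`
to the operators with the operator norm, it sends the indicator of a rectangle `A × B` to the
rank-one operator `f ↦ ⟪1_B, f⟫ 1_A`, and these indicators span a dense subspace.

For a self-adjoint `S` one has `‖S x‖² = ⟪x, S² x⟫ ≤ ‖x‖ ‖S² x‖`, so `S` is compact as soon as
`S²` is. By the semigroup law this gives compactness of `P_{t₀ / 2ⁿ}` for all `n`, and then of
`P_t = P_{t - s} ∘ P_s` for `s = t₀ / 2ⁿ ≤ t`.
-/

open MeasureTheory
open scoped RealInnerProductSpace NNReal ENNReal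

lemma totallyBounded_image_of_forall_dist_lt {α β γ : Type*} [PseudoMetricSpace β]
    [PseudoMetricSpace γ] {f : α → β} {g : α → γ} {s : Set α} (hf : TotallyBounded (f '' s))
    (h : ∀ ε > 0, ∃ δ > 0, ∀ x ∈ s, ∀ y ∈ s, dist (f x) (f y) < δ → dist (g x) (g y) < ε) :
    TotallyBounded (g '' s) := by
  rw [Metric.totallyBounded_iff]
  intro ε hε
  obtain ⟨δ, hδ, hfg⟩ := h ε hε
  obtain ⟨t, hts, ht, hcover⟩ :=
    Set.exists_subset_image_finite_and.1 (Metric.finite_approx_of_totallyBounded hf δ hδ)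
  refine ⟨g '' t, ht.image g, ?_⟩
  rintro _ ⟨x, hx, rfl⟩
  obtain ⟨_, ⟨y, hy, rfl⟩, hxy⟩ := Set.mem_iUnion₂.1 (hcover ⟨x, hx, rfl⟩)
  exact Set.mem_iUnion₂.2 ⟨g y, ⟨y, hy, rfl⟩, hfg x hx y (hts hy) hxy⟩

section SelfAdjoint

variable {𝕜 E : Type*} [RCLike 𝕜] [NormedAddCommGroup E] [InnerProductSpace 𝕜 E]

lemma LinearMap.IsSymmetric.norm_apply_sq_le {S : E →ₗ[𝕜] E} (hS : S.IsSymmetric) (x : E) :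
    ‖S x‖ ^ 2 ≤ ‖x‖ * ‖S (S x)‖ := by
  rw [← inner_self_eq_norm_sq (𝕜 := 𝕜), hS]
  exact re_inner_le_norm _ _

theorem IsCompactOperator.of_isSymmetric_of_comp_self [CompleteSpace E] {S : E →L[𝕜] E}
    (hS : (S : E →ₗ[𝕜] E).IsSymmetric) (hS2 : IsCompactOperator (S.comp S)) :
    IsCompactOperator S := by
  refine (isCompactOperator_iff_isCompact_closure_image_closedBall (S : E →ₗ[𝕜] E)
    zero_lt_one).2 ?_
  have hS2' := (isCompactOperator_iff_isCompact_closure_image_closedBall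
    ((S.comp S : E →L[𝕜] E) : E →ₗ[𝕜] E) zero_lt_one).1 hS2
  refine (totallyBounded_image_of_forall_dist_lt (hS2'.totallyBounded.subset subset_closure)
    fun ε hε => ⟨ε ^ 2 / 2, by positivity, fun x hx y hy hxy => ?_⟩).closure.isCompact_of_isClosed
    isClosed_closure
  have hxy_le : ‖x - y‖ ≤ 2 := by
    rw [mem_closedBall_zero_iff] at hx hy
    linarith [norm_sub_le x y]
  simp only [ContinuousLinearMap.coe_coe, ContinuousLinearMap.comp_apply, dist_eq_norm] at hxy ⊢
  refine lt_of_pow_lt_pow_left₀ 2 hε.le ?_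
  calc ‖S x - S y‖ ^ 2 = ‖S (x - y)‖ ^ 2 := by rw [map_sub]
    _ ≤ ‖x - y‖ * ‖S (S (x - y))‖ := hS.norm_apply_sq_le _
    _ ≤ 2 * ‖S (S x) - S (S y)‖ := by rw [map_sub, map_sub]; gcongr
    _ < ε ^ 2 := by linarith

end SelfAdjoint

namespace MeasureTheory

variable {X Y : Type*}

section IntegralTransform

variable [MeasurableSpace Y] {ν : Measure Y} {κ : X × Y → ℝ} {f : Y → ℝ}

variable (ν) in
noncomputable def integralTransform (κ : X × Y → ℝ) (f : Y → ℝ) (x : X) : ℝ :=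
  ∫ y, κ (x, y) * f y ∂ν

lemma integralTransform_smul_left (c : ℝ) :
    integralTransform ν (c • κ) f = c • integralTransform ν κ f := by
  ext x
  simp only [integralTransform, Pi.smul_apply, smul_eq_mul, mul_assoc, integral_const_mul]

lemma integralTransform_smul_right (c : ℝ) :
    integralTransform ν κ (c • f) = c • integralTransform ν κ f := by
  ext x
  simp only [integralTransform, Pi.smul_apply, smul_eq_mul, mul_left_comm _ c,
    integral_const_mul]

variable [MeasurableSpace X] {μ : Measure X}

lemma eLpNorm_eLpNorm_slice [SFinite ν] {E : Type*} [NormedAddCommGroup E] {p : ℝ≥0} (hp : p ≠ 0)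
    {κ : X × Y → E} (hκ : AEStronglyMeasurable κ (μ.prod ν)) :
    eLpNorm (fun x => eLpNorm (fun y => κ (x, y)) p ν) p μ = eLpNorm κ p (μ.prod ν) := by
  apply ENNReal.rpow_left_injective (x := p) (NNReal.coe_ne_zero.mpr hp)
  simp only [eLpNorm_nnreal_pow_eq_lintegral hp, enorm_eq_self]
  exact (lintegral_prod _ (hκ.enorm.pow_const _)).symm

lemma integralTransform_congr_ae [SFinite ν] {κ' : X × Y → ℝ} {f' : Y → ℝ}
    (hκ : κ =ᵐ[μ.prod ν] κ') (hf : f =ᵐ[ν] f') :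
    integralTransform ν κ f =ᵐ[μ] integralTransform ν κ' f' := by
  filter_upwards [Measure.ae_ae_of_ae_prod hκ] with x hx
  refine integral_congr_ae ?_
  filter_upwards [hx, hf] with y hxy hy
  rw [hxy, hy]

lemma integralTransform_add_left {κ' : X × Y → ℝ}
    (hκ : ∀ᵐ x ∂μ, Integrable (fun y => κ (x, y) * f y) ν)
    (hκ' : ∀ᵐ x ∂μ, Integrable (fun y => κ' (x, y) * f y) ν) :
    integralTransform ν (κ + κ') f =ᵐ[μ] integralTransform ν κ f + integralTransform ν κ' f := by
  filter_upwards [hκ, hκ'] with x hx hx'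
  simp only [integralTransform, Pi.add_apply, add_mul, integral_add hx hx']

lemma integralTransform_add_right {f' : Y → ℝ}
    (hf : ∀ᵐ x ∂μ, Integrable (fun y => κ (x, y) * f y) ν)
    (hf' : ∀ᵐ x ∂μ, Integrable (fun y => κ (x, y) * f' y) ν) :
    integralTransform ν κ (f + f') =ᵐ[μ] integralTransform ν κ f + integralTransform ν κ f' := by
  filter_upwards [hf, hf'] with x hx hx'
  simp only [integralTransform, Pi.add_apply, mul_add, integral_add hx hx']

lemma ae_integrable_slice_mul [SFinite μ] [SFinite ν] (hκ : MemLp κ 2 (μ.prod ν))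
    (hf : MemLp f 2 ν) : ∀ᵐ x ∂μ, Integrable (fun y => κ (x, y) * f y) ν := by
  have hsq := (memLp_two_iff_integrable_sq hκ.1).1 hκ
  filter_upwards [hsq.prod_right_ae, hκ.1.prodMk_left] with x hx hmeas
  exact ((memLp_two_iff_integrable_sq hmeas).2 hx).integrable_mul hf

lemma ae_eLpNorm_slice_mul_le [SFinite ν] (hκ : AEStronglyMeasurable κ (μ.prod ν))
    (hf : AEStronglyMeasurable f ν) : ∀ᵐ x ∂μ,
      eLpNorm (fun y => κ (x, y) * f y) 1 ν ≤ eLpNorm (fun y => κ (x, y)) 2 ν * eLpNorm f 2 ν := by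
  filter_upwards [hκ.prodMk_left] with x hx
  exact eLpNorm_smul_le_mul_eLpNorm (p := 2) (q := 2) (r := 1) (φ := fun y => κ (x, y)) hf hx

lemma eLpNorm_integralTransform_le [SFinite ν] (hκ : AEStronglyMeasurable κ (μ.prod ν))
    (hf : MemLp f 2 ν) :
    eLpNorm (integralTransform ν κ f) 2 μ ≤ eLpNorm κ 2 (μ.prod ν) * eLpNorm f 2 ν := by
  have hpt : ∀ᵐ x ∂μ, ‖integralTransform ν κ f x‖ₑ
      ≤ (eLpNorm f 2 ν).toNNReal * ‖eLpNorm (fun y => κ (x, y)) 2 ν‖ₑ := by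
    filter_upwards [ae_eLpNorm_slice_mul_le hκ hf.1] with x hx
    rw [enorm_eq_self, ENNReal.coe_toNNReal hf.2.ne, mul_comm]
    calc ‖integralTransform ν κ f x‖ₑ ≤ ∫⁻ y, ‖κ (x, y) * f y‖ₑ ∂ν :=
          enorm_integral_le_lintegral_enorm _
      _ = eLpNorm (fun y => κ (x, y) * f y) 1 ν := eLpNorm_one_eq_lintegral_enorm.symm
      _ ≤ _ := hx
  calc eLpNorm (integralTransform ν κ f) 2 μ
      ≤ (eLpNorm f 2 ν).toNNReal • eLpNorm (fun x => eLpNorm (fun y => κ (x, y)) 2 ν) 2 μ :=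
        eLpNorm_le_nnreal_smul_eLpNorm_of_ae_le_mul' hpt 2
    _ = eLpNorm κ 2 (μ.prod ν) * eLpNorm f 2 ν := by
        rw [ENNReal.smul_def, smul_eq_mul, ENNReal.coe_toNNReal hf.2.ne, mul_comm]
        exact congrArg (· * _) (eLpNorm_eLpNorm_slice (p := 2) two_ne_zero hκ)

lemma memLp_integralTransform [SFinite ν] (hκ : MemLp κ 2 (μ.prod ν)) (hf : MemLp f 2 ν) :
    MemLp (integralTransform ν κ f) 2 μ :=
  ⟨(hκ.1.mul (hf.1.comp_quasiMeasurePreserving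
      Measure.quasiMeasurePreserving_snd)).integral_prod_right',
    (eLpNorm_integralTransform_le hκ.1 hf).trans_lt (ENNReal.mul_lt_top hκ.2 hf.2)⟩

end IntegralTransform

section IntegralOperator

variable [MeasurableSpace X] [MeasurableSpace Y] {μ : Measure X} {ν : Measure Y} [SFinite ν]

variable (μ) in
noncomputable def integralTransformLp (κ : Lp ℝ 2 (μ.prod ν)) (f : Lp ℝ 2 ν) : Lp ℝ 2 μ :=
  (memLp_integralTransform (Lp.memLp κ) (Lp.memLp f)).toLp _

lemma integralTransformLp_add_left [SFinite μ] (κ κ' : Lp ℝ 2 (μ.prod ν)) (f : Lp ℝ 2 ν) :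
    integralTransformLp μ (κ + κ') f = integralTransformLp μ κ f + integralTransformLp μ κ' f := by
  rw [integralTransformLp, integralTransformLp, integralTransformLp, ← MemLp.toLp_add]
  exact MemLp.toLp_congr _ _ ((integralTransform_congr_ae (Lp.coeFn_add κ κ') .rfl).trans
    (integralTransform_add_left (ae_integrable_slice_mul (Lp.memLp κ) (Lp.memLp f))
      (ae_integrable_slice_mul (Lp.memLp κ') (Lp.memLp f))))

lemma integralTransformLp_add_right [SFinite μ] (κ : Lp ℝ 2 (μ.prod ν)) (f f' : Lp ℝ 2 ν) :
    integralTransformLp μ κ (f + f') = integralTransformLp μ κ f + integralTransformLp μ κ f' := by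
  rw [integralTransformLp, integralTransformLp, integralTransformLp, ← MemLp.toLp_add]
  exact MemLp.toLp_congr _ _ ((integralTransform_congr_ae .rfl (Lp.coeFn_add f f')).trans
    (integralTransform_add_right (ae_integrable_slice_mul (Lp.memLp κ) (Lp.memLp f))
      (ae_integrable_slice_mul (Lp.memLp κ) (Lp.memLp f'))))

lemma integralTransformLp_smul_left (c : ℝ) (κ : Lp ℝ 2 (μ.prod ν)) (f : Lp ℝ 2 ν) :
    integralTransformLp μ (c • κ) f = c • integralTransformLp μ κ f := by
  rw [integralTransformLp, integralTransformLp, ← MemLp.toLp_const_smul]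
  exact MemLp.toLp_congr _ _ ((integralTransform_congr_ae (Lp.coeFn_smul c κ) .rfl).trans
    (integralTransform_smul_left c).eventuallyEq)

lemma integralTransformLp_smul_right (c : ℝ) (κ : Lp ℝ 2 (μ.prod ν)) (f : Lp ℝ 2 ν) :
    integralTransformLp μ κ (c • f) = c • integralTransformLp μ κ f := by
  rw [integralTransformLp, integralTransformLp, ← MemLp.toLp_const_smul]
  exact MemLp.toLp_congr _ _ ((integralTransform_congr_ae .rfl (Lp.coeFn_smul c f)).trans
    (integralTransform_smul_right c).eventuallyEq)

lemma norm_integralTransformLp_le (κ : Lp ℝ 2 (μ.prod ν)) (f : Lp ℝ 2 ν) :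
    ‖integralTransformLp μ κ f‖ ≤ ‖κ‖ * ‖f‖ := by
  rw [integralTransformLp, Lp.norm_toLp, Lp.norm_def, Lp.norm_def, ← ENNReal.toReal_mul]
  exact ENNReal.toReal_mono (ENNReal.mul_lt_top (Lp.eLpNorm_lt_top κ) (Lp.eLpNorm_lt_top f)).ne
    (eLpNorm_integralTransform_le (Lp.aestronglyMeasurable κ) (Lp.memLp f))

variable (μ ν) in
noncomputable def integralOperator [SFinite μ] :
    Lp ℝ 2 (μ.prod ν) →L[ℝ] Lp ℝ 2 ν →L[ℝ] Lp ℝ 2 μ :=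
  LinearMap.mkContinuous₂
    (LinearMap.mk₂ ℝ (integralTransformLp μ) integralTransformLp_add_left
      integralTransformLp_smul_left integralTransformLp_add_right integralTransformLp_smul_right)
    1 fun κ f => by simpa using norm_integralTransformLp_le κ f

lemma coeFn_integralOperator [SFinite μ] (κ : Lp ℝ 2 (μ.prod ν)) (f : Lp ℝ 2 ν) :
    integralOperator μ ν κ f =ᵐ[μ] integralTransform ν κ f :=
  MemLp.coeFn_toLp (memLp_integralTransform (Lp.memLp κ) (Lp.memLp f))

lemma eq_integralOperator_of_ae [SFinite μ] {T : Lp ℝ 2 ν →L[ℝ] Lp ℝ 2 μ} {k : X × Y → ℝ}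
    (hk : MemLp k 2 (μ.prod ν)) (hT : ∀ f : Lp ℝ 2 ν, ∀ᵐ x ∂μ, T f x = ∫ y, k (x, y) * f y ∂ν) :
    T = integralOperator μ ν (hk.toLp k) := by
  ext1 f
  refine Lp.ext ?_
  filter_upwards [hT f, coeFn_integralOperator (hk.toLp k) f,
    integralTransform_congr_ae hk.coeFn_toLp (.rfl : (f : Y → ℝ) =ᵐ[ν] f)] with x h1 h2 h3
  rw [h1, h2, h3, integralTransform]

end IntegralOperator

section Finite

variable [MeasurableSpace X] [MeasurableSpace Y] {μ : Measure X} {ν : Measure Y}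

lemma ae_eq_zero_of_forall_setIntegral_prod_eq_zero {ρ : Measure (X × Y)} {φ : X × Y → ℝ}
    (hφ : Integrable φ ρ)
    (h : ∀ ⦃A : Set X⦄, MeasurableSet A → ∀ ⦃B : Set Y⦄, MeasurableSet B →
      ∫ z in A ×ˢ B, φ z ∂ρ = 0) :
    φ =ᵐ[ρ] 0 := by
  have hparts : ∀ ⦃A : Set X⦄, MeasurableSet A → ∀ ⦃B : Set Y⦄, MeasurableSet B →
      ∫⁻ z in A ×ˢ B, ENNReal.ofReal (φ z) ∂ρ = ∫⁻ z in A ×ˢ B, ENNReal.ofReal (-φ z) ∂ρ := by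
    intro A hA B hB
    have hAB := integral_eq_lintegral_pos_part_sub_lintegral_neg_part (hφ.restrict (s := A ×ˢ B))
    rw [h hA hB, eq_comm, sub_eq_zero] at hAB
    exact (ENNReal.toReal_eq_toReal_iff' hφ.restrict.lintegral_lt_top.ne
      hφ.neg.restrict.lintegral_lt_top.ne).1 hAB
  filter_upwards [ae_eq_of_setLIntegral_prod_eq hφ.1.aemeasurable.ennreal_ofReal
    hφ.1.aemeasurable.neg.ennreal_ofReal hφ.lintegral_lt_top.ne hparts] with z hz
  have := congrArg ENNReal.toReal hz
  simp only [ENNReal.toReal_ofReal', Pi.neg_apply] at this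
  rw [Pi.zero_apply]
  grind

variable [IsFiniteMeasure μ] [IsFiniteMeasure ν]

variable (μ ν) in
def rectangleIndicators : Set (Lp ℝ 2 (μ.prod ν)) :=
  {κ | ∃ (A : Set X) (B : Set Y) (hA : MeasurableSet A) (hB : MeasurableSet B),
    κ = indicatorConstLp 2 (hA.prod hB) (measure_ne_top _ _) 1}

lemma topologicalClosure_span_rectangleIndicators :
    (Submodule.span ℝ (rectangleIndicators μ ν)).topologicalClosure = ⊤ := by
  rw [Submodule.topologicalClosure_eq_top_iff, Submodule.eq_bot_iff]
  intro φ hφ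
  rw [Submodule.mem_orthogonal] at hφ
  refine (Lp.eq_zero_iff_ae_eq_zero).2 (ae_eq_zero_of_forall_setIntegral_prod_eq_zero
    ((Lp.memLp φ).integrable one_le_two) fun A hA B hB => ?_)
  rw [← L2.inner_indicatorConstLp_one (hA.prod hB) (measure_ne_top _ _)]
  exact hφ _ (Submodule.subset_span ⟨A, B, hA, hB, rfl⟩)

lemma integralOperator_indicatorConstLp_prod {A : Set X} {B : Set Y} (hA : MeasurableSet A)
    (hB : MeasurableSet B) :
    integralOperator μ ν (indicatorConstLp 2 (hA.prod hB) (measure_ne_top _ _) 1)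
      = (ContinuousLinearMap.toSpanSingleton ℝ (indicatorConstLp 2 hA (measure_ne_top μ A) 1)).comp
          (innerSL ℝ (indicatorConstLp 2 hB (measure_ne_top ν B) (1 : ℝ))) := by
  ext1 f
  refine Lp.ext ((coeFn_integralOperator _ f).trans ?_)
  rw [ContinuousLinearMap.comp_apply, ContinuousLinearMap.toSpanSingleton_apply,
    innerSL_apply_apply, L2.inner_indicatorConstLp_one]
  filter_upwards [integralTransform_congr_ae indicatorConstLp_coeFn (.rfl : (f : Y → ℝ) =ᵐ[ν] f),
    Lp.coeFn_smul (∫ y in B, f y ∂ν) (indicatorConstLp 2 hA (measure_ne_top μ A) (1 : ℝ)),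
    indicatorConstLp_coeFn (p := 2) (hs := hA) (hμs := measure_ne_top μ A) (c := (1 : ℝ))]
    with x h1 h2 h3
  rw [h1, h2, Pi.smul_apply, h3, integralTransform, smul_eq_mul, ← integral_indicator hB,
    ← integral_mul_const]
  congr 1 with y
  by_cases hx : x ∈ A <;> by_cases hy : y ∈ B <;> simp [hx, hy]

theorem isCompactOperator_integralOperator (κ : Lp ℝ 2 (μ.prod ν)) :
    IsCompactOperator (integralOperator μ ν κ) := by
  let S := (compactOperator (RingHom.id ℝ) (Lp ℝ 2 ν) (Lp ℝ 2 μ)).comap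
    (integralOperator μ ν).toLinearMap
  have hS : IsClosed (S : Set (Lp ℝ 2 (μ.prod ν))) :=
    isClosed_setOfPred_isCompactOperator.preimage (integralOperator μ ν).continuous
  have hrect : Submodule.span ℝ (rectangleIndicators μ ν) ≤ S := by
    rw [Submodule.span_le]
    rintro _ ⟨A, B, hA, hB, rfl⟩
    change IsCompactOperator (integralOperator μ ν _)
    rw [integralOperator_indicatorConstLp_prod hA hB]
    have hrank : IsCompactOperator (ContinuousLinearMap.toSpanSingleton ℝ
        (indicatorConstLp 2 hA (measure_ne_top μ A) (1 : ℝ))) :=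
      isCompactOperator_of_locallyCompactSpace_rng _
    exact hrank.comp_clm _
  have hclosure := Submodule.topologicalClosure_minimal _ hrect hS
  rw [topologicalClosure_span_rectangleIndicators] at hclosure
  exact hclosure Submodule.mem_top

end Finite

end MeasureTheory

theorem stmt2_general {U : Type*} [MeasurableSpace U] (μ : Measure U) [IsFiniteMeasure μ]
    (P : ℝ≥0 → (Lp ℝ 2 μ →L[ℝ] Lp ℝ 2 μ))
    (hPadd : ∀ s t : ℝ≥0, P (s + t) = (P s).comp (P t))
    (hsym : ∀ (t : ℝ≥0) (f g : Lp ℝ 2 μ), ⟪P t f, g⟫ = ⟪f, P t g⟫)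
    (t₀ : ℝ≥0) (C : ℝ)
    (k : U × U → ℝ) (hk : Measurable k)
    (hbd : ∀ᵐ z ∂(μ.prod μ), |k z| ≤ C)
    (hker : ∀ f : Lp ℝ 2 μ, ∀ᵐ x ∂μ, (P t₀ f : U → ℝ) x = ∫ y, k (x, y) * f y ∂μ) :
    ∀ t : ℝ≥0, 0 < t → IsCompactOperator (P t) := by
  have hk2 : MemLp k 2 (μ.prod μ) := MemLp.of_bound hk.aestronglyMeasurable C (by simpa using hbd)
  have hdyadic (n : ℕ) : IsCompactOperator (P (t₀ / 2 ^ n)) := by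
    induction n with
    | zero =>
      rw [pow_zero, div_one, eq_integralOperator_of_ae hk2 hker]
      exact isCompactOperator_integralOperator _
    | succ n ih =>
      refine .of_isSymmetric_of_comp_self (hsym _) ?_
      rwa [← hPadd, ← two_mul, pow_succ, ← div_div, mul_div_cancel₀ _ two_ne_zero]
  intro t ht
  obtain ⟨n, hn⟩ := pow_unbounded_of_one_lt (t₀ / t) one_lt_two
  have hle : t₀ / 2 ^ n ≤ t := div_le_of_le_mul₀ (by positivity) ht.le (by
    rw [mul_comm]; exact ((div_lt_iff₀ ht).1 hn).le)
  rw [← tsub_add_cancel_of_le hle, hPadd]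
  exact (hdyadic n).clm_comp _

/-- **Lemma 2.2.** On a finite measure space, if a strongly continuous semigroup of self-adjoint
continuous linear operators on `L²(μ)` is, at some time `t₀ > 0`, an integral operator with an
essentially bounded measurable kernel, then `P_t` is a compact operator for every `t > 0`. -/
theorem stmt2 {U : Type*} [MeasurableSpace U] (μ : Measure U) [IsFiniteMeasure μ]
    (P : ℝ≥0 → (Lp ℝ 2 μ →L[ℝ] Lp ℝ 2 μ))
    (hP0 : P 0 = ContinuousLinearMap.id ℝ (Lp ℝ 2 μ))
    (hPadd : ∀ s t : ℝ≥0, P (s + t) = (P s).comp (P t))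
    (hsym : ∀ (t : ℝ≥0) (f g : Lp ℝ 2 μ), ⟪P t f, g⟫ = ⟪f, P t g⟫)
    (hcont : ∀ f : Lp ℝ 2 μ, Continuous fun t : ℝ≥0 => P t f)
    (t₀ : ℝ≥0) (ht₀ : 0 < t₀) (C : ℝ) (hC : 0 ≤ C)
    (k : U × U → ℝ) (hk : Measurable k)
    (hbd : ∀ᵐ z ∂(μ.prod μ), |k z| ≤ C)
    (hker : ∀ f : Lp ℝ 2 μ, ∀ᵐ x ∂μ, (P t₀ f : U → ℝ) x = ∫ y, k (x, y) * f y ∂μ) :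
    ∀ t : ℝ≥0, 0 < t → IsCompactOperator (P t) :=
  stmt2_general μ P hPadd hsym t₀ C k hk hbd hker
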